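/- arXiv:1606.07855 — 9 statements merged into one kernel-verified Lean document; each statement's English description precedes it below -/
import Mathlib

section
/- KKT sufficiency and uniqueness for strictly convex quadratic programs: Let H be a real symmetric positive definite n×n matrix, A a real m×n matrix, d ∈ ℝᵐ. Suppose x₀ ∈ ℝⁿ satisfies A x₀ ≤ d, and there exists y ∈ ℝᵐ with y ≥ 0, H x₀ + Aᵀ y = 0, and yᵢ · ((A x₀)ᵢ − dᵢ) = 0 for every i. Then (1/2) x₀ᵀ H x₀ < (1/2) xᵀ H x for every x ≠ x₀ with A x ≤ d; i.e., x₀ is the unique global minimizer of (1/2) xᵀ H x over the polyhedron {x : A x ≤ d}. -/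
open Matrix

/-- KKT sufficiency and uniqueness for strictly convex quadratic programs. -/
theorem qp_kkt_sufficiency_uniqueness {m n : ℕ}
    (H : Matrix (Fin n) (Fin n) ℝ)
    (hHsym : Hᵀ = H)
    (hHpd : ∀ v : Fin n → ℝ, v ≠ 0 → 0 < v ⬝ᵥ H.mulVec v)
    (A : Matrix (Fin m) (Fin n) ℝ) (d : Fin m → ℝ)
    (x₀ : Fin n → ℝ)
    (hfeas : A.mulVec x₀ ≤ d)
    (y : Fin m → ℝ)
    (hy : 0 ≤ y)
    (hstat : H.mulVec x₀ + Aᵀ.mulVec y = 0)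
    (hcomp : ∀ i, y i * (A.mulVec x₀ i - d i) = 0) :
    ∀ x : Fin n → ℝ, x ≠ x₀ → A.mulVec x ≤ d →
      (1/2) * (x₀ ⬝ᵥ H.mulVec x₀) < (1/2) * (x ⬝ᵥ H.mulVec x) := by
  intro x hx hxf
  set v := x - x₀ with hv
  have hv0 : v ≠ 0 := sub_ne_zero.mpr hx
  have hpd := hHpd v hv0
  have hsym : ∀ a b : Fin n → ℝ, a ⬝ᵥ H.mulVec b = b ⬝ᵥ H.mulVec a := by
    intro a b
    conv_rhs => rw [← hHsym, mulVec_transpose]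
    rw [dotProduct_mulVec, dotProduct_comm]
  have hkey : 0 ≤ v ⬝ᵥ H.mulVec x₀ := by
    have h1 : H.mulVec x₀ = -(Aᵀ.mulVec y) :=
      eq_neg_of_add_eq_zero_left hstat
    rw [h1, dotProduct_neg, dotProduct_mulVec, vecMul_transpose]
    have hAv : A.mulVec v = A.mulVec x - A.mulVec x₀ := by
      rw [hv, mulVec_sub]
    have hsum : A.mulVec v ⬝ᵥ y ≤ 0 := by
      rw [hAv]
      unfold dotProduct
      apply Finset.sum_nonpos
      intro i _
      have hyy : (0:ℝ) ≤ y i := by simpa using hy i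
      have hc := hcomp i
      have hfx := hxf i
      have hf0 := hfeas i
      simp only [Pi.sub_apply]
      nlinarith [mul_le_mul_of_nonneg_right hfx hyy]
    linarith
  have hx' : x = x₀ + v := by simp [hv]
  have hexp : x ⬝ᵥ H.mulVec x
      = x₀ ⬝ᵥ H.mulVec x₀ + 2 * (v ⬝ᵥ H.mulVec x₀) + v ⬝ᵥ H.mulVec v := by
    rw [hx', mulVec_add, add_dotProduct, dotProduct_add, dotProduct_add,
      hsym x₀ v]
    ring
  rw [hexp]
  linarith
end

section
/- KKT necessity for strictly convex quadratic programs: Let H be a real symmetric positive definite n×n matrix, A a real m×n matrix, d ∈ ℝᵐ. Suppose x₀ ∈ ℝⁿ satisfies A x₀ ≤ d and (1/2) x₀ᵀ H x₀ ≤ (1/2) xᵀ H x for every x with A x ≤ d (i.e., x₀ minimizes (1/2) xᵀ H x over the polyhedron). Then there exists y ∈ ℝᵐ with y ≥ 0, H x₀ + Aᵀ y = 0, and yᵢ = 0 for every index i with (A x₀)ᵢ < dᵢ. -/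
/-!
At a minimiser `x₀`, no feasible direction `w` (one with `(A w)ᵢ ≤ 0` on the active constraints)
decreases the objective to first order, i.e. `⟪H x₀, w⟫ ≥ 0`. By Farkas' lemma this places
`-H x₀` in the cone generated by the active rows of `A`, and the coefficients are the multipliers.
Farkas' lemma is Hahn–Banach separation from a closed cone; a finitely generated cone is closed
because, by Carathéodory's theorem for cones, it is a finite union of images of the nonnegative
orthant under injective linear maps.
-/

open Matrix Filter Topology

namespace PointedCone

variable {ι E : Type*} [AddCommGroup E] [Module ℝ E] {v : ι → E} {s : Finset ι} {x : E}

theorem mem_hull_image_finset_iff :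
    x ∈ hull ℝ (v '' s) ↔ ∃ c : ι → ℝ, (∀ i ∈ s, 0 ≤ c i) ∧ ∑ i ∈ s, c i • v i = x := by
  rw [Submodule.mem_span_image_finset_iff_exists_fun']
  constructor
  · rintro ⟨c, rfl⟩
    exact ⟨fun i => c i, fun i _ => (c i).2, rfl⟩
  · rintro ⟨c, hc, rfl⟩
    refine ⟨fun i => ⟨max (c i) 0, le_max_right _ _⟩, Finset.sum_congr rfl fun i hi => ?_⟩
    rw [Nonneg.mk_smul, max_eq_left (hc i hi)]

theorem exists_mem_hull_image_erase [DecidableEq ι] (hs : ¬LinearIndepOn ℝ v s)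
    (hx : x ∈ hull ℝ (v '' s)) : ∃ j ∈ s, x ∈ hull ℝ (v '' (s.erase j)) := by
  obtain ⟨c, hc, rfl⟩ := mem_hull_image_finset_iff.1 hx
  obtain ⟨g, hg, hgpos⟩ : ∃ g : ι → ℝ, ∑ i ∈ s, g i • v i = 0 ∧ ∃ i ∈ s, 0 < g i := by
    obtain ⟨g, hg, i, hi, hgi⟩ := not_linearIndepOn_finset_iff.1 hs
    rcases hgi.lt_or_gt with hneg | hpos
    · exact ⟨-g, by simp [neg_smul, hg], i, hi, neg_pos.2 hneg⟩
    · exact ⟨g, hg, i, hi, hpos⟩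
  -- Move along the relation `g` until the first coefficient hits zero.
  have hP : (s.filter (0 < g ·)).Nonempty := by simpa [Finset.filter_nonempty_iff] using hgpos
  obtain ⟨j, hjP, hjmin⟩ := (s.filter (0 < g ·)).exists_min_image (fun i => c i / g i) hP
  rw [Finset.mem_filter] at hjP
  set τ := c j / g j
  have hτ : 0 ≤ τ := div_nonneg (hc j hjP.1) hjP.2.le
  refine ⟨j, hjP.1, mem_hull_image_finset_iff.2 ⟨fun i => c i - τ * g i, fun i hi => ?_, ?_⟩⟩
  · have hi := Finset.mem_of_mem_erase hi
    rw [sub_nonneg]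
    rcases le_or_gt (g i) 0 with hgi | hgi
    · exact (mul_nonpos_of_nonneg_of_nonpos hτ hgi).trans (hc i hi)
    · exact (le_div_iff₀ hgi).1 (hjmin i (Finset.mem_filter.2 ⟨hi, hgi⟩))
  · calc ∑ i ∈ s.erase j, (c i - τ * g i) • v i = ∑ i ∈ s, (c i - τ * g i) • v i :=
          Finset.sum_erase _ (by simp [τ, div_mul_cancel₀ _ hjP.2.ne'])
      _ = ∑ i ∈ s, c i • v i - τ • ∑ i ∈ s, g i • v i := by
          simp only [sub_smul, mul_smul, Finset.sum_sub_distrib, Finset.smul_sum]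
      _ = ∑ i ∈ s, c i • v i := by rw [hg, smul_zero, sub_zero]

theorem exists_linearIndepOn_subset_of_mem_hull_image (hx : x ∈ hull ℝ (v '' s)) :
    ∃ t ⊆ s, LinearIndepOn ℝ v t ∧ x ∈ hull ℝ (v '' t) := by
  classical
  induction s using Finset.strongInduction with
  | H s ih =>
    by_cases hs : LinearIndepOn ℝ v s
    · exact ⟨s, subset_rfl, hs, hx⟩
    obtain ⟨j, hj, hxj⟩ := exists_mem_hull_image_erase hs hx
    obtain ⟨t, hts, ht, hxt⟩ := ih _ (Finset.erase_ssubset hj) hxj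
    exact ⟨t, hts.trans (Finset.erase_subset j s), ht, hxt⟩

section Topology

variable [TopologicalSpace E] [IsTopologicalAddGroup E] [ContinuousSMul ℝ E] [T2Space E]

theorem isClosed_hull_image_of_linearIndepOn {t : Finset ι} (ht : LinearIndepOn ℝ v t) :
    IsClosed (hull ℝ (v '' t) : Set E) := by
  set L := Fintype.linearCombination ℝ fun i : t => v i
  have hL : LinearMap.ker L = ⊥ :=
    LinearMap.ker_eq_bot.2 (linearIndependent_iff_injective_fintypeLinearCombination.1 ht)
  have himage : (hull ℝ (v '' t) : Set E) = L '' Set.Ici 0 := by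
    ext y
    simp only [SetLike.mem_coe, Submodule.mem_span_image_finset_iff_exists_fun, Set.mem_image,
      Set.mem_Ici, L, Fintype.linearCombination_apply]
    constructor
    · rintro ⟨c, rfl⟩
      exact ⟨fun i => c i, fun i => (c i).2, rfl⟩
    · rintro ⟨c, hc, rfl⟩
      exact ⟨fun i => ⟨c i, hc i⟩, rfl⟩
  rw [himage]
  exact (LinearMap.isClosedEmbedding_of_injective hL).isClosedMap _ isClosed_Ici

theorem isClosed_hull_image_finset (v : ι → E) (s : Finset ι) :
    IsClosed (hull ℝ (v '' s) : Set E) := by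
  classical
  have hunion : (hull ℝ (v '' s) : Set E) =
      ⋃ t ∈ s.powerset.filter fun t : Finset ι => LinearIndepOn ℝ v (t : Set ι),
        (hull ℝ (v '' t) : Set E) := by
    ext y
    simp only [SetLike.mem_coe, Set.mem_iUnion, Finset.mem_filter, Finset.mem_powerset,
      exists_prop]
    constructor
    · intro hy
      obtain ⟨t, hts, ht, hyt⟩ := exists_linearIndepOn_subset_of_mem_hull_image hy
      exact ⟨t, ⟨hts, ht⟩, hyt⟩
    · rintro ⟨t, ⟨hts, -⟩, hyt⟩
      exact Submodule.span_mono (Set.image_mono (Finset.coe_subset.2 hts)) hyt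
  rw [hunion]
  exact isClosed_biUnion_finset fun t ht =>
    isClosed_hull_image_of_linearIndepOn (Finset.mem_filter.1 ht).2

end Topology

theorem mem_hull_image_finset_of_forall_dotProduct_nonpos {n : Type*} [Fintype n]
    (v : ι → n → ℝ) (s : Finset ι) {x : n → ℝ}
    (h : ∀ w, (∀ i ∈ s, v i ⬝ᵥ w ≤ 0) → x ⬝ᵥ w ≤ 0) : x ∈ hull ℝ (v '' s) := by
  classical
  by_contra hx
  let C : ProperCone ℝ (n → ℝ) := ⟨hull ℝ (v '' s), isClosed_hull_image_finset v s⟩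
  obtain ⟨f, hfC, hfx⟩ := C.hyperplane_separation_point (x₀ := x) hx
  set w : n → ℝ := fun j => -f fun k => if j = k then 1 else 0
  have hf : ∀ u, u ⬝ᵥ w = -f u := fun u => by
    have := f.toLinearMap.pi_apply_eq_sum_univ u
    simp only [ContinuousLinearMap.coe_coe, smul_eq_mul] at this
    simp [w, dotProduct, this]
  have := h w fun i hi => by
    rw [hf, neg_nonpos]
    exact hfC _ (subset_hull ⟨i, hi, rfl⟩)
  rw [hf] at this
  linarith

end PointedCone

theorem tendsto_add_mul_nhdsGT_zero (a b : ℝ) :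
    Tendsto (fun t => a + t * b) (𝓝[>] (0 : ℝ)) (𝓝 a) :=
  ((by fun_prop : Continuous fun t : ℝ => a + t * b).tendsto' 0 a (by simp)).mono_left
    nhdsWithin_le_nhds

section QuadraticProgram

variable {m n : Type*} [Fintype m] [Fintype n]

theorem Matrix.IsSymm.add_smul_dotProduct_mulVec_add_smul {H : Matrix n n ℝ} (hH : H.IsSymm)
    (x w : n → ℝ) (t : ℝ) :
    (x + t • w) ⬝ᵥ H *ᵥ (x + t • w) =
      x ⬝ᵥ H *ᵥ x + t * (2 * (H *ᵥ x ⬝ᵥ w) + t * (w ⬝ᵥ H *ᵥ w)) := by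
  have hcross : x ⬝ᵥ H *ᵥ w = H *ᵥ x ⬝ᵥ w := by
    rw [dotProduct_mulVec, ← mulVec_transpose, hH.eq]
  simp only [mulVec_add, mulVec_smul, add_dotProduct, dotProduct_add, smul_dotProduct,
    dotProduct_smul, smul_eq_mul, hcross, dotProduct_comm w (H *ᵥ x)]
  ring

theorem eventually_mulVec_add_smul_le {A : Matrix m n ℝ} {d : m → ℝ} {x w : n → ℝ}
    (hx : A *ᵥ x ≤ d) (hw : ∀ i, (A *ᵥ x) i = d i → (A *ᵥ w) i ≤ 0) :
    ∀ᶠ t in 𝓝[>] (0 : ℝ), A *ᵥ (x + t • w) ≤ d := by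
  simp only [Pi.le_def, mulVec_add, mulVec_smul, Pi.add_apply, Pi.smul_apply, smul_eq_mul]
  refine eventually_all.2 fun i => ?_
  rcases (hx i).eq_or_lt with hi | hi
  · filter_upwards [self_mem_nhdsWithin] with t (ht : 0 < t)
    linarith [mul_nonpos_of_nonneg_of_nonpos ht.le (hw i hi)]
  · exact ((tendsto_add_mul_nhdsGT_zero _ _).eventually_lt_const hi).mono fun t ht => ht.le

theorem dotProduct_mulVec_nonneg_of_isMinOn {H : Matrix n n ℝ} (hH : H.IsSymm)
    {A : Matrix m n ℝ} {d : m → ℝ} {x w : n → ℝ}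
    (hmin : IsMinOn (fun x => x ⬝ᵥ H *ᵥ x) {x | A *ᵥ x ≤ d} x) (hx : A *ᵥ x ≤ d)
    (hw : ∀ i, (A *ᵥ x) i = d i → (A *ᵥ w) i ≤ 0) : 0 ≤ H *ᵥ x ⬝ᵥ w := by
  by_contra! hneg
  have hslope : ∀ᶠ t in 𝓝[>] (0 : ℝ), 2 * (H *ᵥ x ⬝ᵥ w) + t * (w ⬝ᵥ H *ᵥ w) < 0 :=
    (tendsto_add_mul_nhdsGT_zero _ _).eventually_lt_const (by linarith)
  obtain ⟨t, ht, hfeas, hdesc⟩ :=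
    (eventually_mem_nhdsWithin.and ((eventually_mulVec_add_smul_le hx hw).and hslope)).exists
  have hle := isMinOn_iff.1 hmin _ hfeas
  rw [hH.add_smul_dotProduct_mulVec_add_smul] at hle
  nlinarith [mul_neg_of_pos_of_neg (show (0 : ℝ) < t from ht) hdesc]

end QuadraticProgram

theorem qp_kkt_necessity_general {m n : ℕ}
    (H : Matrix (Fin n) (Fin n) ℝ)
    (hHsym : Hᵀ = H)
    (A : Matrix (Fin m) (Fin n) ℝ) (d : Fin m → ℝ)
    (x₀ : Fin n → ℝ)
    (hfeas : A.mulVec x₀ ≤ d)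
    (hopt : ∀ x : Fin n → ℝ, A.mulVec x ≤ d →
      (1/2) * (x₀ ⬝ᵥ H.mulVec x₀) ≤ (1/2) * (x ⬝ᵥ H.mulVec x)) :
    ∃ y : Fin m → ℝ, 0 ≤ y ∧ H.mulVec x₀ + Aᵀ.mulVec y = 0 ∧
      ∀ i, A.mulVec x₀ i < d i → y i = 0 := by
  classical
  set s : Finset (Fin m) := {i | (A *ᵥ x₀) i = d i}
  have hmin : IsMinOn (fun x => x ⬝ᵥ H *ᵥ x) {x | A *ᵥ x ≤ d} x₀ :=
    isMinOn_iff.2 fun x hx => by linarith [hopt x hx]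
  have hcone : -(H *ᵥ x₀) ∈ PointedCone.hull ℝ ((fun i => A i) '' s) :=
    PointedCone.mem_hull_image_finset_of_forall_dotProduct_nonpos _ s fun w hw => by
      have := dotProduct_mulVec_nonneg_of_isMinOn hHsym hmin hfeas fun i hi =>
        hw i (Finset.mem_filter.2 ⟨Finset.mem_univ i, hi⟩)
      simpa [neg_dotProduct] using this
  obtain ⟨c, hc, hsum⟩ := PointedCone.mem_hull_image_finset_iff.1 hcone
  refine ⟨fun i => if i ∈ s then c i else 0, fun i => ?_, ?_, fun i hi => if_neg ?_⟩
  · dsimp only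
    split_ifs with h
    exacts [hc i h, le_rfl]
  · rw [mulVec_transpose, vecMul_eq_sum]
    simp only [ite_smul, zero_smul, Finset.sum_ite_mem, Finset.univ_inter, hsum, add_neg_cancel]
  · simpa [s] using hi.ne

/-- KKT necessity for strictly convex quadratic programs. -/
theorem qp_kkt_necessity {m n : ℕ}
    (H : Matrix (Fin n) (Fin n) ℝ)
    (hHsym : Hᵀ = H)
    (hHpd : ∀ v : Fin n → ℝ, v ≠ 0 → 0 < v ⬝ᵥ H.mulVec v)
    (A : Matrix (Fin m) (Fin n) ℝ) (d : Fin m → ℝ)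
    (x₀ : Fin n → ℝ)
    (hfeas : A.mulVec x₀ ≤ d)
    (hopt : ∀ x : Fin n → ℝ, A.mulVec x ≤ d →
      (1/2) * (x₀ ⬝ᵥ H.mulVec x₀) ≤ (1/2) * (x ⬝ᵥ H.mulVec x)) :
    ∃ y : Fin m → ℝ, 0 ≤ y ∧ H.mulVec x₀ + Aᵀ.mulVec y = 0 ∧
      ∀ i, A.mulVec x₀ i < d i → y i = 0 :=
  qp_kkt_necessity_general H hHsym A d x₀ hfeas hopt
end

section
/- Theorem 1(1), sufficiency direction (MPLP): Consider the parametric linear program min cᵀx subject to A x ≤ b + E θ, where A is a real m×n matrix, E a real m×p matrix, b ∈ ℝᵐ, c ∈ ℝⁿ, and θ ∈ ℝᵖ is the parameter. Let I ⊆ {1,…,m} be an index set with exactly n elements, and let Ã, Ẽ, b̃ denote the submatrices/subvector of A, E, b formed by the rows in I, and Ā, Ē, b̄ those formed by the rows in the complement of I. Assume Ã is invertible, and assume there exists y₀ ∈ ℝᵐ with y₀ ≥ 0, c + Aᵀ y₀ = 0, and (y₀)ᵢ = 0 for every i ∉ I. Then for every θ ∈ ℝᵖ satisfying (Ā Ã⁻¹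 Ẽ − Ē) θ < b̄ − Ā Ã⁻¹ b̃ (componentwise strict inequality), the point x*(θ) := Ã⁻¹ (b̃ + Ẽ θ) satisfies à x*(θ) = b̃ + Ẽ θ and Ā x*(θ) < b̄ + Ē θ (so x*(θ) is feasible with active constraint set exactly I), and cᵀ x*(θ) ≤ cᵀ x for every x with A x ≤ b + E θ. -/
open Matrix

/-- Theorem 1(1) of the paper, sufficiency direction (MPLP).  The index set
`I = Set.range σ` has exactly `n` elements (`σ : Fin n → Fin m` injective);
`At, Et, bt` are the rows of `A, E, b` in `I` and `Ab, Eb, bb` the rows in its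
complement.  If `Ã` is invertible and a nonnegative multiplier `y₀` supported
on `I` satisfies stationarity, then for every `θ` in the critical region the
point `x*(θ) = Ã⁻¹(b̃ + Ẽθ)` is feasible with active set exactly `I` and
minimizes `cᵀx` over `{x : A x ≤ b + E θ}`. -/
theorem mplp_sufficiency {m n p : ℕ}
    (A : Matrix (Fin m) (Fin n) ℝ) (E : Matrix (Fin m) (Fin p) ℝ)
    (b : Fin m → ℝ) (c : Fin n → ℝ)
    (σ : Fin n → Fin m) (hσ : Function.Injective σ)
    (At : Matrix (Fin n) (Fin n) ℝ) (Et : Matrix (Fin n) (Fin p) ℝ) (bt : Fin n → ℝ)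
    (Ab : Matrix {i : Fin m // i ∉ Set.range σ} (Fin n) ℝ)
    (Eb : Matrix {i : Fin m // i ∉ Set.range σ} (Fin p) ℝ)
    (bb : {i : Fin m // i ∉ Set.range σ} → ℝ)
    (hAt : At = A.submatrix σ id) (hEt : Et = E.submatrix σ id) (hbt : bt = b ∘ σ)
    (hAb : Ab = A.submatrix Subtype.val id) (hEb : Eb = E.submatrix Subtype.val id)
    (hbb : bb = b ∘ Subtype.val)
    (hInv : IsUnit At)
    (y₀ : Fin m → ℝ) (hy₀ : 0 ≤ y₀)
    (hstat : c + Aᵀ.mulVec y₀ = 0)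
    (hsupp : ∀ i : Fin m, i ∉ Set.range σ → y₀ i = 0) :
    ∀ θ : Fin p → ℝ,
      (∀ i : {i : Fin m // i ∉ Set.range σ},
        ((Ab * At⁻¹ * Et - Eb).mulVec θ) i < (bb - (Ab * At⁻¹).mulVec bt) i) →
      At.mulVec (At⁻¹.mulVec (bt + Et.mulVec θ)) = bt + Et.mulVec θ ∧
      (∀ i : {i : Fin m // i ∉ Set.range σ},
        Ab.mulVec (At⁻¹.mulVec (bt + Et.mulVec θ)) i < (bb + Eb.mulVec θ) i) ∧
      (∀ x : Fin n → ℝ, A.mulVec x ≤ b + E.mulVec θ →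
        c ⬝ᵥ At⁻¹.mulVec (bt + Et.mulVec θ) ≤ c ⬝ᵥ x) := by
  intro θ hθ
  set v := bt + Et.mulVec θ with hv
  have hdet : IsUnit At.det := (Matrix.isUnit_iff_isUnit_det At).mp hInv
  have hAA : At * At⁻¹ = 1 := Matrix.mul_nonsing_inv At hdet
  have hactive : At.mulVec (At⁻¹.mulVec v) = v := by
    rw [Matrix.mulVec_mulVec, hAA, Matrix.one_mulVec]
  -- active rows of A
  have hrow : ∀ j : Fin n, A.mulVec (At⁻¹.mulVec v) (σ j) = b (σ j) + E.mulVec θ (σ j) := by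
    intro j
    have := congrFun hactive j
    simp only [hAt, hEt, hbt, hv, Matrix.mulVec, Matrix.submatrix, dotProduct,
      Pi.add_apply, Function.comp_apply, Matrix.of_apply, id] at this ⊢
    exact this
  refine ⟨hactive, ?_, ?_⟩
  · intro i
    have h1 := hθ i
    have hexp : Ab.mulVec (At⁻¹.mulVec v) i
        = (Ab * At⁻¹).mulVec bt i + (Ab * At⁻¹ * Et).mulVec θ i := by
      have h2 : At⁻¹.mulVec v = At⁻¹.mulVec bt + (At⁻¹ * Et).mulVec θ := by
        rw [hv, Matrix.mulVec_add, Matrix.mulVec_mulVec]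
      rw [h2, Matrix.mulVec_add, Pi.add_apply, Matrix.mulVec_mulVec,
        Matrix.mulVec_mulVec, Matrix.mul_assoc]
    simp only [Matrix.sub_mulVec, Pi.sub_apply] at h1
    simp only [Pi.add_apply]
    linarith
  · intro x hx
    have hc : c = -(Aᵀ.mulVec y₀) := by
      have := hstat
      funext j
      have := congrFun hstat j
      simp only [Pi.add_apply, Pi.zero_apply] at this
      simp only [Pi.neg_apply]
      linarith
    have hkey : ∀ z : Fin n → ℝ, c ⬝ᵥ z = -(y₀ ⬝ᵥ A.mulVec z) := by
      intro z
      rw [hc, neg_dotProduct, neg_inj, Matrix.dotProduct_mulVec,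
        Matrix.mulVec_transpose]
    have hstar : y₀ ⬝ᵥ A.mulVec (At⁻¹.mulVec v) = y₀ ⬝ᵥ (b + E.mulVec θ) := by
      unfold dotProduct
      refine Finset.sum_congr rfl fun i _ => ?_
      by_cases hi : i ∈ Set.range σ
      · obtain ⟨j, rfl⟩ := hi
        rw [hrow j]; rfl
      · rw [hsupp i hi]; ring
    have hle : y₀ ⬝ᵥ A.mulVec x ≤ y₀ ⬝ᵥ (b + E.mulVec θ) := by
      unfold dotProduct
      refine Finset.sum_le_sum fun i _ => ?_
      exact mul_le_mul_of_nonneg_left (hx i) (hy₀ i)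
    rw [hkey, hkey, hstar]
    linarith
end

section
/- Theorem 1(1), uniqueness under strict complementarity (MPLP): Consider the parametric linear program min cᵀx subject to A x ≤ b + E θ, where A is a real m×n matrix, E a real m×p matrix, b ∈ ℝᵐ, c ∈ ℝⁿ, and θ ∈ ℝᵖ is the parameter. Let I ⊆ {1,…,m} be an index set with exactly n elements, and let Ã, Ẽ, b̃ denote the submatrices/subvector of A, E, b formed by the rows in I, and Ā, Ē, b̄ those formed by the rows in the complement of I. Assume Ã is invertible, and assume there exists y₀ ∈ ℝᵐ with c + Aᵀ y₀ = 0, (y₀)ᵢ > 0 for every i ∈ I, and (y₀)ᵢ = 0 for every i ∉ I. Then for every θ with (Ā Ã⁻¹ Ẽ − Ē) θ < b̄ − Ā Ã⁻¹ b̃, the point x*(θ) := Ã⁻¹ (b̃ + Ẽ θ) is the unique minimizer of cᵀx over {x : A x ≤ b + E θ}: every feasible x with cᵀ x = cᵀ x*(θ) equals x*(θ). -/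
open Matrix

/-- Theorem 1(1) of the paper, uniqueness under strict complementarity (MPLP).
The index set `I = Set.range σ` has exactly `n` elements; `At, Et, bt` are the
rows of `A, E, b` in `I` and `Ab, Eb, bb` the rows in its complement.  If `Ã`
is invertible and a multiplier `y₀`, strictly positive exactly on `I`,
satisfies stationarity, then for every `θ` in the critical region the point
`x*(θ) = Ã⁻¹(b̃ + Ẽθ)` is the unique minimizer of `cᵀx` over
`{x : A x ≤ b + E θ}`. -/
theorem mplp_uniqueness_strict_complementarity {m n p : ℕ}
    (A : Matrix (Fin m) (Fin n) ℝ) (E : Matrix (Fin m) (Fin p) ℝ)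
    (b : Fin m → ℝ) (c : Fin n → ℝ)
    (σ : Fin n → Fin m) (hσ : Function.Injective σ)
    (At : Matrix (Fin n) (Fin n) ℝ) (Et : Matrix (Fin n) (Fin p) ℝ) (bt : Fin n → ℝ)
    (Ab : Matrix {i : Fin m // i ∉ Set.range σ} (Fin n) ℝ)
    (Eb : Matrix {i : Fin m // i ∉ Set.range σ} (Fin p) ℝ)
    (bb : {i : Fin m // i ∉ Set.range σ} → ℝ)
    (hAt : At = A.submatrix σ id) (hEt : Et = E.submatrix σ id) (hbt : bt = b ∘ σ)
    (hAb : Ab = A.submatrix Subtype.val id) (hEb : Eb = E.submatrix Subtype.val id)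
    (hbb : bb = b ∘ Subtype.val)
    (hInv : IsUnit At)
    (y₀ : Fin m → ℝ)
    (hstat : c + Aᵀ.mulVec y₀ = 0)
    (hpos : ∀ i : Fin m, i ∈ Set.range σ → 0 < y₀ i)
    (hsupp : ∀ i : Fin m, i ∉ Set.range σ → y₀ i = 0) :
    ∀ θ : Fin p → ℝ,
      (∀ i : {i : Fin m // i ∉ Set.range σ},
        ((Ab * At⁻¹ * Et - Eb).mulVec θ) i < (bb - (Ab * At⁻¹).mulVec bt) i) →
      A.mulVec (At⁻¹.mulVec (bt + Et.mulVec θ)) ≤ b + E.mulVec θ ∧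
      (∀ x : Fin n → ℝ, A.mulVec x ≤ b + E.mulVec θ →
        c ⬝ᵥ At⁻¹.mulVec (bt + Et.mulVec θ) ≤ c ⬝ᵥ x) ∧
      (∀ x : Fin n → ℝ, A.mulVec x ≤ b + E.mulVec θ →
        c ⬝ᵥ x = c ⬝ᵥ At⁻¹.mulVec (bt + Et.mulVec θ) →
        x = At⁻¹.mulVec (bt + Et.mulVec θ)) := by
  have hdet : IsUnit At.det := (Matrix.isUnit_iff_isUnit_det At).mp hInv
  intro θ hθ
  set x' : Fin n → ℝ := At⁻¹.mulVec (bt + Et.mulVec θ) with hx'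
  have hAtx' : At.mulVec x' = bt + Et.mulVec θ := by
    rw [hx', Matrix.mulVec_mulVec, Matrix.mul_nonsing_inv At hdet, Matrix.one_mulVec]
  -- active rows are tight at x'
  have hrow : ∀ j, A.mulVec x' (σ j) = b (σ j) + E.mulVec θ (σ j) := by
    intro j
    have h := congrFun hAtx' j
    rw [hAt] at h
    rw [hEt, hbt] at h
    simpa [Matrix.mulVec, dotProduct, Matrix.submatrix] using h
  -- feasibility
  have hfeas : A.mulVec x' ≤ b + E.mulVec θ := by
    intro i
    by_cases hi : i ∈ Set.range σ
    · obtain ⟨j, rfl⟩ := hi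
      exact le_of_eq (hrow j)
    · have h := hθ (⟨i, hi⟩ : {i : Fin m // i ∉ Set.range σ})
      rw [hAb, hEb, hbb] at h
      simp only [Matrix.sub_mulVec, Pi.sub_apply, Matrix.mulVec_mulVec] at h
      have hAbx' : (A.submatrix Subtype.val id * At⁻¹).mulVec (bt + Et.mulVec θ) (⟨i, hi⟩ : {i : Fin m // i ∉ Set.range σ})
          = A.mulVec x' i := by
        rw [hx', ← Matrix.mulVec_mulVec]
        simp [Matrix.mulVec, dotProduct, Matrix.submatrix]
      rw [Matrix.mulVec_add] at hAbx'
      have hEbθ : (E.submatrix Subtype.val id).mulVec θ (⟨i, hi⟩ : {i : Fin m // i ∉ Set.range σ}) = E.mulVec θ i := by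
        simp [Matrix.mulVec, dotProduct, Matrix.submatrix]
      simp only [Function.comp_apply] at h
      have key : ((A.submatrix Subtype.val id * At⁻¹).mulVec (Et.mulVec θ))
            (⟨i, hi⟩ : {i : Fin m // i ∉ Set.range σ})
          = ((A.submatrix Subtype.val id * At⁻¹ * Et).mulVec θ)
            (⟨i, hi⟩ : {i : Fin m // i ∉ Set.range σ}) := by
        rw [Matrix.mulVec_mulVec, Matrix.mul_assoc]
      have : A.mulVec x' i < b i + E.mulVec θ i := by
        rw [hEbθ] at h
        rw [← hAbx']
        simp only [Pi.add_apply, key] at *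
        linarith
      exact le_of_lt this
  -- cost via multiplier
  have hc : ∀ z : Fin n → ℝ, c ⬝ᵥ z = -(y₀ ⬝ᵥ A.mulVec z) := by
    intro z
    have hcneg : c = -(Aᵀ.mulVec y₀) := eq_neg_of_add_eq_zero_left hstat
    rw [hcneg, neg_dotProduct, Matrix.mulVec_transpose, ← Matrix.dotProduct_mulVec]
  -- restrict the dot product to the support of y₀
  have hsum : ∀ w : Fin m → ℝ, y₀ ⬝ᵥ w = ∑ j, y₀ (σ j) * w (σ j) := by
    intro w
    have h1 : ∑ i : Fin m, y₀ i * w i = ∑ i ∈ Finset.univ.image σ, y₀ i * w i := by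
      symm
      apply Finset.sum_subset (Finset.subset_univ _)
      intro i _ hiim
      have hnr : i ∉ Set.range σ := by
        simpa [Finset.mem_image, Set.mem_range] using hiim
      rw [hsupp i hnr, zero_mul]
    simp only [dotProduct]
    rw [h1, Finset.sum_image (fun x _ y _ h => hσ h)]
  have hgap : ∀ x : Fin n → ℝ,
      c ⬝ᵥ x - c ⬝ᵥ x' = ∑ j, y₀ (σ j) * (A.mulVec x' (σ j) - A.mulVec x (σ j)) := by
    intro x
    rw [hc x, hc x', hsum, hsum, neg_sub_neg, ← Finset.sum_sub_distrib]
    exact Finset.sum_congr rfl fun j _ => (mul_sub _ _ _).symm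
  have hterm : ∀ x : Fin n → ℝ, A.mulVec x ≤ b + E.mulVec θ →
      ∀ j, 0 ≤ y₀ (σ j) * (A.mulVec x' (σ j) - A.mulVec x (σ j)) := by
    intro x hx j
    have h1 : A.mulVec x (σ j) ≤ A.mulVec x' (σ j) := by
      rw [hrow j]
      simpa using hx (σ j)
    have h2 : 0 < y₀ (σ j) := hpos _ ⟨j, rfl⟩
    nlinarith
  refine ⟨hfeas, ?_, ?_⟩
  · intro x hx
    have hg := hgap x
    have hnn : (0:ℝ) ≤ ∑ j, y₀ (σ j) * (A.mulVec x' (σ j) - A.mulVec x (σ j)) :=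
      Finset.sum_nonneg fun j _ => hterm x hx j
    linarith
  · intro x hx heq
    have hg := hgap x
    rw [heq, sub_self] at hg
    have hall := (Finset.sum_eq_zero_iff_of_nonneg fun j _ => hterm x hx j).mp hg.symm
    have hAx : ∀ j, A.mulVec x (σ j) = A.mulVec x' (σ j) := by
      intro j
      have h0 := hall j (Finset.mem_univ j)
      have h2 : 0 < y₀ (σ j) := hpos _ ⟨j, rfl⟩
      rcases mul_eq_zero.mp h0 with h | h
      · exact absurd h (ne_of_gt h2)
      · linarith [sub_eq_zero.mp h]
    have hAt' : At.mulVec x = At.mulVec x' := by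
      funext j
      rw [hAt]
      simpa [Matrix.mulVec, dotProduct, Matrix.submatrix] using hAx j
    have hfin := congrArg (At⁻¹.mulVec) hAt'
    rwa [Matrix.mulVec_mulVec, Matrix.mulVec_mulVec, Matrix.nonsing_inv_mul At hdet,
      Matrix.one_mulVec, Matrix.one_mulVec] at hfin
end

section
/- Constancy of the dual solution on a critical region (MPLP): Consider the parametric linear program min cᵀx subject to A x ≤ b + E θ, where A is a real m×n matrix, E a real m×p matrix, b ∈ ℝᵐ, c ∈ ℝⁿ, and θ ∈ ℝᵖ is the parameter. Let I ⊆ {1,…,m} be an index set with exactly n elements, and let Ã, Ẽ, b̃ denote the submatrices/subvector of A, E, b formed by the rows in I, and Ā, Ē, b̄ those formed by the rows in the complement of I. Assume Ã is invertible, and assume y₀ ∈ ℝᵐ satisfies y₀ ≥ 0, c + Aᵀ y₀ = 0, and (y₀)ᵢ = 0 for every i ∉ I. Then for every θ with (Ā Ã⁻¹ Ẽ − Ē) θ < b̄ − Ā Ã⁻¹ b̃, the vector y₀ is an optimal solution of the dual linear program: for every y ∈ ℝᵐ with y ≥ 0 and Aᵀ y = −c, one has −(b + E θ)ᵀ y ≤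 −(b + E θ)ᵀ y₀, and moreover −(b + E θ)ᵀ y₀ = cᵀ Ã⁻¹ (b̃ + Ẽ θ), the optimal primal value. -/
open Matrix

/-- Constancy of the dual solution on a critical region (MPLP).  The index set
`I = Set.range σ` has exactly `n` elements; `At, Et, bt` are the rows of
`A, E, b` in `I` and `Ab, Eb, bb` the rows in its complement.  If `Ã` is
invertible and `y₀ ≥ 0` is supported on `I` with `c + Aᵀy₀ = 0`, then for every
`θ` in the critical region, `y₀` is optimal for the dual program
`max −(b+Eθ)ᵀy  s.t. Aᵀy = −c, y ≥ 0`, and its objective value equals the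
optimal primal value `cᵀ Ã⁻¹(b̃ + Ẽθ)`. -/
theorem mplp_dual_constant_on_critical_region {m n p : ℕ}
    (A : Matrix (Fin m) (Fin n) ℝ) (E : Matrix (Fin m) (Fin p) ℝ)
    (b : Fin m → ℝ) (c : Fin n → ℝ)
    (σ : Fin n → Fin m) (hσ : Function.Injective σ)
    (At : Matrix (Fin n) (Fin n) ℝ) (Et : Matrix (Fin n) (Fin p) ℝ) (bt : Fin n → ℝ)
    (Ab : Matrix {i : Fin m // i ∉ Set.range σ} (Fin n) ℝ)
    (Eb : Matrix {i : Fin m // i ∉ Set.range σ} (Fin p) ℝ)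
    (bb : {i : Fin m // i ∉ Set.range σ} → ℝ)
    (hAt : At = A.submatrix σ id) (hEt : Et = E.submatrix σ id) (hbt : bt = b ∘ σ)
    (hAb : Ab = A.submatrix Subtype.val id) (hEb : Eb = E.submatrix Subtype.val id)
    (hbb : bb = b ∘ Subtype.val)
    (hInv : IsUnit At)
    (y₀ : Fin m → ℝ) (hy₀ : 0 ≤ y₀)
    (hstat : c + Aᵀ.mulVec y₀ = 0)
    (hsupp : ∀ i : Fin m, i ∉ Set.range σ → y₀ i = 0) :
    ∀ θ : Fin p → ℝ,
      (∀ i : {i : Fin m // i ∉ Set.range σ},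
        ((Ab * At⁻¹ * Et - Eb).mulVec θ) i < (bb - (Ab * At⁻¹).mulVec bt) i) →
      (∀ y : Fin m → ℝ, 0 ≤ y → Aᵀ.mulVec y = -c →
        -((b + E.mulVec θ) ⬝ᵥ y) ≤ -((b + E.mulVec θ) ⬝ᵥ y₀)) ∧
      -((b + E.mulVec θ) ⬝ᵥ y₀) = c ⬝ᵥ At⁻¹.mulVec (bt + Et.mulVec θ) := by
  subst hAt hEt hbt hAb hEb hbb
  intro θ hθ
  have hdet : IsUnit (A.submatrix σ id).det := (Matrix.isUnit_iff_isUnit_det _).mp hInv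
  set At := A.submatrix σ id with hAt
  set x := At⁻¹.mulVec (b ∘ σ + (E.submatrix σ id).mulVec θ) with hx
  have hAtx : At.mulVec x = b ∘ σ + (E.submatrix σ id).mulVec θ := by
    rw [hx, Matrix.mulVec_mulVec, Matrix.mul_nonsing_inv _ hdet, Matrix.one_mulVec]
  have hrow : ∀ j, A.mulVec x (σ j) = b (σ j) + E.mulVec θ (σ j) := by
    intro j
    have h := congrFun hAtx j
    simpa [hAt, Matrix.mulVec, dotProduct] using h
  have hrow' : ∀ i, (hi : i ∉ Set.range σ) → A.mulVec x i < b i + E.mulVec θ i := by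
    intro i hi
    have h := hθ ⟨i, hi⟩
    have e1 : ((A.submatrix (Subtype.val : {i : Fin m // i ∉ Set.range σ} → Fin m) id * At⁻¹ * (E.submatrix σ id)).mulVec θ) ⟨i, hi⟩
        = (A.submatrix (Subtype.val : {i : Fin m // i ∉ Set.range σ} → Fin m) id).mulVec
            (At⁻¹.mulVec ((E.submatrix σ id).mulVec θ)) ⟨i, hi⟩ := by
      rw [Matrix.mulVec_mulVec, Matrix.mulVec_mulVec]
    have e2 : ((A.submatrix (Subtype.val : {i : Fin m // i ∉ Set.range σ} → Fin m) id * At⁻¹).mulVec (b ∘ σ)) ⟨i, hi⟩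
        = (A.submatrix (Subtype.val : {i : Fin m // i ∉ Set.range σ} → Fin m) id).mulVec
            (At⁻¹.mulVec (b ∘ σ)) ⟨i, hi⟩ := by
      rw [Matrix.mulVec_mulVec]
    have e3 : A.mulVec x i
        = (A.submatrix (Subtype.val : {i : Fin m // i ∉ Set.range σ} → Fin m) id).mulVec
            (At⁻¹.mulVec (b ∘ σ)) ⟨i, hi⟩
          + (A.submatrix (Subtype.val : {i : Fin m // i ∉ Set.range σ} → Fin m) id).mulVec
            (At⁻¹.mulVec ((E.submatrix σ id).mulVec θ)) ⟨i, hi⟩ := by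
      have hx' : x = At⁻¹.mulVec (b ∘ σ) + At⁻¹.mulVec ((E.submatrix σ id).mulVec θ) := by
        rw [hx, Matrix.mulVec_add]
      rw [hx']
      simp [-Matrix.mulVec_mulVec, Matrix.mulVec, dotProduct, Pi.add_apply, mul_add,
        Finset.sum_add_distrib]
    have hE : (E.submatrix (Subtype.val : {i : Fin m // i ∉ Set.range σ} → Fin m) id).mulVec θ ⟨i, hi⟩
        = E.mulVec θ i := by
      simp [Matrix.mulVec, dotProduct]
    simp only [Matrix.sub_mulVec, Pi.sub_apply] at h
    rw [e1, hE] at h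
    rw [e2] at h
    rw [e3]
    simp only [Function.comp_apply] at h
    linarith
  have hfeas : ∀ i, A.mulVec x i ≤ b i + E.mulVec θ i := by
    intro i
    by_cases hi : i ∈ Set.range σ
    · obtain ⟨j, rfl⟩ := hi
      exact le_of_eq (hrow j)
    · exact le_of_lt (hrow' i hi)
  have hstat' : Aᵀ.mulVec y₀ = -c := eq_neg_of_add_eq_zero_right hstat
  have hident : ∀ y : Fin m → ℝ, Aᵀ.mulVec y = -c → (A.mulVec x) ⬝ᵥ y = -(c ⬝ᵥ x) := by
    intro y hy
    rw [dotProduct_comm, Matrix.dotProduct_mulVec, ← Matrix.mulVec_transpose, hy]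
    simp [neg_dotProduct]
  have heq₀ : (b + E.mulVec θ) ⬝ᵥ y₀ = (A.mulVec x) ⬝ᵥ y₀ := by
    unfold dotProduct
    refine Finset.sum_congr rfl fun i _ => ?_
    by_cases hi : i ∈ Set.range σ
    · obtain ⟨j, rfl⟩ := hi
      rw [Pi.add_apply, ← hrow j]
    · rw [hsupp i hi, mul_zero, mul_zero]
  have hval : -((b + E.mulVec θ) ⬝ᵥ y₀) = c ⬝ᵥ x := by
    rw [heq₀, hident y₀ hstat']; ring
  refine ⟨fun y hy hdual => ?_, hval⟩
  have hle : (A.mulVec x) ⬝ᵥ y ≤ (b + E.mulVec θ) ⬝ᵥ y := by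
    refine Finset.sum_le_sum fun i _ => ?_
    exact mul_le_mul_of_nonneg_right (hfeas i) (hy i)
  have := hident y hdual
  rw [hval]
  linarith
end

section
/- Explicit KKT solution formulas for the MPQP (derivation step of Theorem 1(2)): Let H be a real symmetric positive definite n×n matrix, A a real m×n matrix, E a real m×p matrix, b ∈ ℝᵐ, θ ∈ ℝᵖ. Let I ⊆ {1,…,m} be an index set, let Ã, Ẽ, b̃ denote the submatrices/subvector of A, E, b formed by the rows in I, and assume the rows of Ã are linearly independent. Suppose x ∈ ℝⁿ and y ∈ ℝᵐ satisfy H x + Aᵀ y = 0, yᵢ = 0 for every i ∉ I, and à x = b̃ + Ẽ θ. Then the restriction ỹ of y to the indices in I equals −(à H⁻¹ Ãᵀ)⁻¹ (b̃ + Ẽ θ), and x = H⁻¹ Ãᵀ (à H⁻¹ Ãᵀ)⁻¹ (b̃ + Ẽ θ). -/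
/-!
Stationarity together with `y = 0` off the active set gives `H x = -Ãᵀ ỹ`, so
`x = -H⁻¹ Ãᵀ ỹ`; substituting into `Ã x = c` yields `(Ã H⁻¹ Ãᵀ) ỹ = -c`. Positivity of
`vᵀ H v` passes to `H⁻¹` and, since the rows of `Ã` are independent, to `Ã H⁻¹ Ãᵀ`, which is
therefore invertible.
-/

open Matrix

namespace Matrix

section Positivity

variable {ι 𝕜 : Type*} [Fintype ι] [Field 𝕜] [Preorder 𝕜]

theorem isUnit_of_dotProduct_mulVec_pos [DecidableEq ι] {H : Matrix ι ι 𝕜}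
    (hH : ∀ v : ι → 𝕜, v ≠ 0 → 0 < v ⬝ᵥ H *ᵥ v) : IsUnit H := by
  refine mulVec_injective_iff_isUnit.mp ((injective_iff_map_eq_zero' (mulVecLin H)).mpr ?_)
  intro v
  refine ⟨fun hv => ?_, fun hv => hv ▸ mulVec_zero H⟩
  by_contra hne
  have hpos := hH v hne
  rw [show H *ᵥ v = 0 from hv, dotProduct_zero] at hpos
  exact lt_irrefl 0 hpos

/-- `w ⬝ H⁻¹ w = (H u) ⬝ u = u ⬝ H u` for `u = H⁻¹ w`. -/
theorem dotProduct_nonsing_inv_mulVec_pos [DecidableEq ι] {H : Matrix ι ι 𝕜}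
    (hH : ∀ v : ι → 𝕜, v ≠ 0 → 0 < v ⬝ᵥ H *ᵥ v) :
    ∀ w : ι → 𝕜, w ≠ 0 → 0 < w ⬝ᵥ H⁻¹ *ᵥ w := by
  intro w hw
  have hdet : IsUnit H.det := (isUnit_iff_isUnit_det H).mp (isUnit_of_dotProduct_mulVec_pos hH)
  have hw_eq : H *ᵥ (H⁻¹ *ᵥ w) = w := by
    rw [mulVec_mulVec, mul_nonsing_inv H hdet, one_mulVec]
  have hu : H⁻¹ *ᵥ w ≠ 0 := fun h0 => hw (by rw [← hw_eq, h0, mulVec_zero])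
  calc 0 < H⁻¹ *ᵥ w ⬝ᵥ H *ᵥ (H⁻¹ *ᵥ w) := hH _ hu
    _ = w ⬝ᵥ H⁻¹ *ᵥ w := by rw [hw_eq, dotProduct_comm]

theorem dotProduct_mul_mul_transpose_mulVec_pos {κ : Type*} [Fintype κ] {H : Matrix ι ι 𝕜}
    {B : Matrix κ ι 𝕜}
    (hH : ∀ v : ι → 𝕜, v ≠ 0 → 0 < v ⬝ᵥ H *ᵥ v) (hB : LinearIndependent 𝕜 B.row) :
    ∀ v : κ → 𝕜, v ≠ 0 → 0 < v ⬝ᵥ (B * H * Bᵀ) *ᵥ v := by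
  intro v hv
  have hBv : Bᵀ *ᵥ v ≠ 0 := by
    rw [mulVec_transpose]
    exact fun h => hv (vecMul_injective_iff.mpr hB (h.trans (zero_vecMul B).symm))
  calc 0 < Bᵀ *ᵥ v ⬝ᵥ H *ᵥ (Bᵀ *ᵥ v) := hH _ hBv
    _ = v ⬝ᵥ (B * H * Bᵀ) *ᵥ v := by
      rw [← mulVec_mulVec, ← mulVec_mulVec, dotProduct_mulVec v B, mulVec_transpose]

end Positivity

theorem transpose_mulVec_eq_submatrix_of_support {ι κ μ R : Type*} [Fintype ι] [Fintype κ]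
    [Semiring R] (A : Matrix ι μ R) {σ : κ → ι} (hσ : Function.Injective σ) {y : ι → R}
    (hy : ∀ i, i ∉ Set.range σ → y i = 0) :
    Aᵀ *ᵥ y = (A.submatrix σ id)ᵀ *ᵥ (y ∘ σ) := by
  ext j
  refine (Fintype.sum_of_injective σ hσ _ _ (fun i hi => ?_) fun _ => rfl).symm
  simp [hy i hi]

theorem kkt_solution_eq {ι κ R : Type*} [Fintype ι] [Fintype κ] [DecidableEq ι] [DecidableEq κ]
    [CommRing R] {H : Matrix ι ι R} {B : Matrix κ ι R} (hH : IsUnit H.det)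
    (hM : IsUnit (B * H⁻¹ * Bᵀ).det) {x : ι → R} {z c : κ → R}
    (hstat : H *ᵥ x + Bᵀ *ᵥ z = 0) (hcon : B *ᵥ x = c) :
    z = -((B * H⁻¹ * Bᵀ)⁻¹ *ᵥ c) ∧ x = (H⁻¹ * Bᵀ * (B * H⁻¹ * Bᵀ)⁻¹) *ᵥ c := by
  have hx : x = -((H⁻¹ * Bᵀ) *ᵥ z) := by
    rw [← mulVec_mulVec, ← mulVec_neg, ← eq_neg_of_add_eq_zero_left hstat, mulVec_mulVec,
      nonsing_inv_mul H hH, one_mulVec]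
  have hz : (B * H⁻¹ * Bᵀ) *ᵥ z = -c := by
    rw [← hcon, hx, mulVec_neg, neg_neg, mulVec_mulVec, Matrix.mul_assoc]
  have hz' : z = -((B * H⁻¹ * Bᵀ)⁻¹ *ᵥ c) := by
    rw [← mulVec_neg, ← hz, mulVec_mulVec, nonsing_inv_mul _ hM, one_mulVec]
  refine ⟨hz', ?_⟩
  rw [hx, hz', mulVec_neg, neg_neg, mulVec_mulVec, Matrix.mul_assoc]

end Matrix

theorem mpqp_kkt_solution_formulas_general {m n p k : ℕ}
    (H : Matrix (Fin n) (Fin n) ℝ)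
    (hHpd : ∀ v : Fin n → ℝ, v ≠ 0 → 0 < v ⬝ᵥ H.mulVec v)
    (A : Matrix (Fin m) (Fin n) ℝ)
    (θ : Fin p → ℝ)
    (σ : Fin k → Fin m) (hσ : Function.Injective σ)
    (At : Matrix (Fin k) (Fin n) ℝ) (Et : Matrix (Fin k) (Fin p) ℝ) (bt : Fin k → ℝ)
    (hAt : At = A.submatrix σ id)
    (hrows : LinearIndependent ℝ (fun i : Fin k => At i))
    (x : Fin n → ℝ) (y : Fin m → ℝ)
    (hstat : H.mulVec x + Aᵀ.mulVec y = 0)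
    (hsupp : ∀ i : Fin m, i ∉ Set.range σ → y i = 0)
    (hactive : At.mulVec x = bt + Et.mulVec θ) :
    (fun i : Fin k => y (σ i)) = -((At * H⁻¹ * Atᵀ)⁻¹.mulVec (bt + Et.mulVec θ)) ∧
    x = (H⁻¹ * Atᵀ * (At * H⁻¹ * Atᵀ)⁻¹).mulVec (bt + Et.mulVec θ) := by
  have hH : IsUnit H.det :=
    (isUnit_iff_isUnit_det H).mp (isUnit_of_dotProduct_mulVec_pos hHpd)
  have hM : IsUnit (At * H⁻¹ * Atᵀ).det :=
    (isUnit_iff_isUnit_det _).mp <| isUnit_of_dotProduct_mulVec_pos <|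
      dotProduct_mul_mul_transpose_mulVec_pos (dotProduct_nonsing_inv_mulVec_pos hHpd) hrows
  have hAy : Aᵀ *ᵥ y = Atᵀ *ᵥ (y ∘ σ) := by
    rw [hAt]; exact transpose_mulVec_eq_submatrix_of_support A hσ hsupp
  exact kkt_solution_eq hH hM (hAy ▸ hstat) hactive

/-- Explicit KKT solution formulas for the MPQP (derivation step of
Theorem 1(2)).  The active index set is `I = Set.range σ`; `At, Et, bt` are
the rows of `A, E, b` in `I`, assumed linearly independent.  If `(x, y)`
satisfies stationarity, `y` vanishes off `I`, and the active constraints hold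
with equality, then the restriction of `y` to `I` and `x` are given by the
explicit affine formulas in `θ`. -/
theorem mpqp_kkt_solution_formulas {m n p k : ℕ}
    (H : Matrix (Fin n) (Fin n) ℝ)
    (hHsym : Hᵀ = H)
    (hHpd : ∀ v : Fin n → ℝ, v ≠ 0 → 0 < v ⬝ᵥ H.mulVec v)
    (A : Matrix (Fin m) (Fin n) ℝ) (E : Matrix (Fin m) (Fin p) ℝ) (b : Fin m → ℝ)
    (θ : Fin p → ℝ)
    (σ : Fin k → Fin m) (hσ : Function.Injective σ)
    (At : Matrix (Fin k) (Fin n) ℝ) (Et : Matrix (Fin k) (Fin p) ℝ) (bt : Fin k → ℝ)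
    (hAt : At = A.submatrix σ id) (hEt : Et = E.submatrix σ id) (hbt : bt = b ∘ σ)
    (hrows : LinearIndependent ℝ (fun i : Fin k => At i))
    (x : Fin n → ℝ) (y : Fin m → ℝ)
    (hstat : H.mulVec x + Aᵀ.mulVec y = 0)
    (hsupp : ∀ i : Fin m, i ∉ Set.range σ → y i = 0)
    (hactive : At.mulVec x = bt + Et.mulVec θ) :
    (fun i : Fin k => y (σ i)) = -((At * H⁻¹ * Atᵀ)⁻¹.mulVec (bt + Et.mulVec θ)) ∧
    x = (H⁻¹ * Atᵀ * (At * H⁻¹ * Atᵀ)⁻¹).mulVec (bt + Et.mulVec θ) :=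
  mpqp_kkt_solution_formulas_general H hHpd A θ σ hσ At Et bt hAt hrows x y hstat hsupp hactive
end

section
/- Theorem 1(2), sufficiency direction (MPQP): Let H be a real symmetric positive definite n×n matrix, A a real m×n matrix, E a real m×p matrix, b ∈ ℝᵐ. Let I ⊆ {1,…,m} be an index set, let Ã, Ẽ, b̃ denote the submatrices/subvector of A, E, b formed by the rows in I, and Ā, Ē, b̄ those formed by the rows in the complement of I; assume the rows of Ã are linearly independent. Suppose θ ∈ ℝᵖ satisfies (i) (Ã H⁻¹ Ãᵀ)⁻¹ (b̃ + Ẽ θ) ≤ 0 (componentwise), and (ii) Ā H⁻¹ Ãᵀ (Ã H⁻¹ Ãᵀ)⁻¹ (b̃ + Ẽ θ) < b̄ + Ē θ (componentwise strict). Then x*(θ) := H⁻¹ Ãᵀ (Ã H⁻¹ Ãᵀ)⁻¹ (b̃ + Ẽ θ) satisfies Ã x*(θ) = b̃ + Ẽ θ and Ā x*(θ) < b̄ + Ē θ (so x*(θ) is feasible with all constraints in I active and all constraints outside I inactive), and x*(θ) is the unique global minimizer of (1/2) xᵀ H x over {x : A x ≤ b + E θ}. -/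
open Matrix

/-- Theorem 1(2) of the paper, sufficiency direction (MPQP).  The active index
set is `I = Set.range σ`; `At, Et, bt` are the rows of `A, E, b` in `I`
(assumed linearly independent) and `Ab, Eb, bb` the rows in its complement.
If `θ` lies in the critical region `𝒫_p ∩ 𝒫_d`, then
`x*(θ) = H⁻¹Ãᵀ(ÃH⁻¹Ãᵀ)⁻¹(b̃ + Ẽθ)` is feasible with active set exactly `I`
and is the unique global minimizer of `(1/2)xᵀHx` over `{x : A x ≤ b + E θ}`. -/
theorem mpqp_sufficiency {m n p k : ℕ}
    (H : Matrix (Fin n) (Fin n) ℝ)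
    (hHsym : Hᵀ = H)
    (hHpd : ∀ v : Fin n → ℝ, v ≠ 0 → 0 < v ⬝ᵥ H.mulVec v)
    (A : Matrix (Fin m) (Fin n) ℝ) (E : Matrix (Fin m) (Fin p) ℝ) (b : Fin m → ℝ)
    (σ : Fin k → Fin m) (hσ : Function.Injective σ)
    (At : Matrix (Fin k) (Fin n) ℝ) (Et : Matrix (Fin k) (Fin p) ℝ) (bt : Fin k → ℝ)
    (Ab : Matrix {i : Fin m // i ∉ Set.range σ} (Fin n) ℝ)
    (Eb : Matrix {i : Fin m // i ∉ Set.range σ} (Fin p) ℝ)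
    (bb : {i : Fin m // i ∉ Set.range σ} → ℝ)
    (hAt : At = A.submatrix σ id) (hEt : Et = E.submatrix σ id) (hbt : bt = b ∘ σ)
    (hAb : Ab = A.submatrix Subtype.val id) (hEb : Eb = E.submatrix Subtype.val id)
    (hbb : bb = b ∘ Subtype.val)
    (hrows : LinearIndependent ℝ (fun i : Fin k => At i))
    (θ : Fin p → ℝ)
    (hPd : (At * H⁻¹ * Atᵀ)⁻¹.mulVec (bt + Et.mulVec θ) ≤ 0)
    (hPp : ∀ i : {i : Fin m // i ∉ Set.range σ},
      (Ab * H⁻¹ * Atᵀ * (At * H⁻¹ * Atᵀ)⁻¹).mulVec (bt + Et.mulVec θ) i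
        < (bb + Eb.mulVec θ) i) :
    At.mulVec ((H⁻¹ * Atᵀ * (At * H⁻¹ * Atᵀ)⁻¹).mulVec (bt + Et.mulVec θ))
        = bt + Et.mulVec θ ∧
    (∀ i : {i : Fin m // i ∉ Set.range σ},
      Ab.mulVec ((H⁻¹ * Atᵀ * (At * H⁻¹ * Atᵀ)⁻¹).mulVec (bt + Et.mulVec θ)) i
        < (bb + Eb.mulVec θ) i) ∧
    (∀ x : Fin n → ℝ, A.mulVec x ≤ b + E.mulVec θ →
      x ≠ (H⁻¹ * Atᵀ * (At * H⁻¹ * Atᵀ)⁻¹).mulVec (bt + Et.mulVec θ) →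
      (1/2) * (((H⁻¹ * Atᵀ * (At * H⁻¹ * Atᵀ)⁻¹).mulVec (bt + Et.mulVec θ)) ⬝ᵥ
          H.mulVec ((H⁻¹ * Atᵀ * (At * H⁻¹ * Atᵀ)⁻¹).mulVec (bt + Et.mulVec θ)))
        < (1/2) * (x ⬝ᵥ H.mulVec x)) := by
  subst hAt hEt hbt hAb hEb hbb
  set At : Matrix (Fin k) (Fin n) ℝ := A.submatrix σ id with hAt
  set Et : Matrix (Fin k) (Fin p) ℝ := E.submatrix σ id with hEt
  set Ab : Matrix {i : Fin m // i ∉ Set.range σ} (Fin n) ℝ := A.submatrix Subtype.val id with hAb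
  set v : Fin k → ℝ := b ∘ σ + Et.mulVec θ with hv
  -- H is invertible
  have hHdet : IsUnit H.det := by
    rw [isUnit_iff_ne_zero]
    intro hdet
    obtain ⟨w, hw, hw0⟩ := Matrix.exists_mulVec_eq_zero_iff.2 hdet
    have := hHpd w hw
    rw [hw0, dotProduct_zero] at this
    exact lt_irrefl 0 this
  -- H⁻¹ is positive definite
  have hHinv_pd : ∀ u : Fin n → ℝ, u ≠ 0 → 0 < u ⬝ᵥ H⁻¹.mulVec u := by
    intro u hu
    set w := H⁻¹.mulVec u with hwdef
    have hw : H.mulVec w = u := by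
      rw [hwdef, Matrix.mulVec_mulVec, Matrix.mul_nonsing_inv H hHdet, Matrix.one_mulVec]
    have hw0 : w ≠ 0 := by
      intro h
      apply hu
      rw [← hw, h, Matrix.mulVec_zero]
    calc u ⬝ᵥ H⁻¹.mulVec u = (H.mulVec w) ⬝ᵥ w := by rw [hw]
      _ = w ⬝ᵥ H.mulVec w := dotProduct_comm _ _
      _ > 0 := hHpd w hw0
  -- Atᵀ *ᵥ c ≠ 0 for c ≠ 0
  have hAtT : ∀ c : Fin k → ℝ, c ≠ 0 → Atᵀ.mulVec c ≠ 0 := by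
    intro c hc h0
    apply hc
    have hsum : ∑ i : Fin k, c i • At i = 0 := by
      funext j
      have := congrFun h0 j
      simpa [Matrix.mulVec, dotProduct, mul_comm] using this
    funext i
    exact Fintype.linearIndependent_iff.1 hrows c hsum i
  set S := At * H⁻¹ * Atᵀ with hS
  -- S is invertible
  have hSdet : IsUnit S.det := by
    rw [isUnit_iff_ne_zero]
    intro hdet
    obtain ⟨c, hc, hc0⟩ := Matrix.exists_mulVec_eq_zero_iff.2 hdet
    have hpos : 0 < c ⬝ᵥ S.mulVec c := by
      have : c ⬝ᵥ S.mulVec c = (Atᵀ.mulVec c) ⬝ᵥ H⁻¹.mulVec (Atᵀ.mulVec c) := by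
        rw [hS, Matrix.mul_assoc, ← Matrix.mulVec_mulVec, Matrix.dotProduct_mulVec,
          ← Matrix.mulVec_transpose, ← Matrix.mulVec_mulVec, Matrix.dotProduct_mulVec,
          ← Matrix.mulVec_transpose,
          show (H⁻¹)ᵀ = H⁻¹ by rw [Matrix.transpose_nonsing_inv, hHsym]]
      rw [this]
      exact hHinv_pd _ (hAtT c hc)
    rw [hc0, dotProduct_zero] at hpos
    exact lt_irrefl 0 hpos
  -- Part 1
  have h1 : At.mulVec ((H⁻¹ * Atᵀ * S⁻¹).mulVec v) = v := by
    rw [Matrix.mulVec_mulVec, ← Matrix.mul_assoc, ← Matrix.mul_assoc, ← hS,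
      Matrix.mul_nonsing_inv S hSdet, Matrix.one_mulVec]
  set xs := (H⁻¹ * Atᵀ * S⁻¹).mulVec v with hxs
  set lam := S⁻¹.mulVec v with hlam
  have hHxs : H.mulVec xs = Atᵀ.mulVec lam := by
    rw [hxs, Matrix.mulVec_mulVec, ← Matrix.mul_assoc, ← Matrix.mul_assoc,
      Matrix.mul_nonsing_inv H hHdet, Matrix.one_mul, ← Matrix.mulVec_mulVec]
  refine ⟨h1, ?_, ?_⟩
  · -- Part 2
    intro i
    have := hPp i
    rwa [show Ab * H⁻¹ * Atᵀ * S⁻¹ = Ab * (H⁻¹ * Atᵀ * S⁻¹) by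
        rw [Matrix.mul_assoc, Matrix.mul_assoc, Matrix.mul_assoc],
      ← Matrix.mulVec_mulVec] at this
  · -- Part 3: unique global minimizer
    intro x hfeas hne
    set d := x - xs with hd
    have hd0 : d ≠ 0 := fun h => hne (by rwa [hd, sub_eq_zero] at h)
    have hdpos : 0 < d ⬝ᵥ H.mulVec d := hHpd d hd0
    -- cross term is nonnegative
    have hlamle : ∀ i, lam i ≤ 0 := hPd
    have hAtx : ∀ i, At.mulVec x i ≤ v i := by
      intro i
      have := hfeas (σ i)
      simpa [hAt, hEt, hv, Matrix.mulVec, Matrix.submatrix, dotProduct,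
        Pi.add_apply] using this
    have hcross : 0 ≤ d ⬝ᵥ H.mulVec xs := by
      rw [hHxs, Matrix.dotProduct_mulVec, ← Matrix.mulVec_transpose,
        Matrix.transpose_transpose]
      refine Finset.sum_nonneg fun i _ => ?_
      have h1i : At.mulVec d i = At.mulVec x i - v i := by
        rw [hd, Matrix.mulVec_sub, h1, Pi.sub_apply]
      have : At.mulVec d i ≤ 0 := by rw [h1i]; linarith [hAtx i]
      nlinarith [this, hlamle i]
    -- expand
    have hx : x = xs + d := by rw [hd]; ring
    have hsymcross : xs ⬝ᵥ H.mulVec d = d ⬝ᵥ H.mulVec xs := by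
      rw [Matrix.dotProduct_mulVec, ← Matrix.mulVec_transpose, hHsym,
        dotProduct_comm]
    have hexp : x ⬝ᵥ H.mulVec x
        = xs ⬝ᵥ H.mulVec xs + 2 * (d ⬝ᵥ H.mulVec xs) + d ⬝ᵥ H.mulVec d := by
      rw [hx, Matrix.mulVec_add, dotProduct_add, add_dotProduct, add_dotProduct,
        hsymcross]
      ring
    rw [hexp]
    linarith
end

section
/- Affine dependence of the optimal value on the parameter within a critical region (MPLP): Consider the parametric linear program min cᵀx subject to A x ≤ b + E θ, where A is a real m×n matrix, E a real m×p matrix, b ∈ ℝᵐ, c ∈ ℝⁿ, and θ ∈ ℝᵖ is the parameter. Let I ⊆ {1,…,m} be an index set with exactly n elements, and let Ã, Ẽ, b̃ denote the submatrices/subvector of A, E, b formed by the rows in I, and Ā, Ē, b̄ those formed by the rows in the complement of I. Assume Ã is invertible and that there exists y₀ ∈ ℝᵐ with y₀ ≥ 0, c + Aᵀ y₀ = 0, and (y₀)ᵢ = 0 for every i ∉ I. Then for every θ with (Ā Ã⁻¹ Ẽ − Ē) θ < b̄ − Ā Ã⁻¹ b̃, the optimal value of the linear program equals cᵀ Ã⁻¹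 (b̃ + Ẽ θ); in particular, on the critical region the optimal value is an affine function of θ, namely θ ↦ cᵀ Ã⁻¹ b̃ + (cᵀ Ã⁻¹ Ẽ) θ. -/
open Matrix

/-- Affine dependence of the optimal value on the parameter within a critical
region (MPLP).  The index set `I = Set.range σ` has exactly `n` elements;
`At, Et, bt` are the rows of `A, E, b` in `I` and `Ab, Eb, bb` the rows in its
complement.  For every `θ` in the critical region, the optimal value of
`min cᵀx  s.t. A x ≤ b + E θ` is attained and equals the affine function
`θ ↦ cᵀÃ⁻¹b̃ + (cᵀÃ⁻¹Ẽ)θ`. -/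
theorem mplp_value_affine_on_critical_region {m n p : ℕ}
    (A : Matrix (Fin m) (Fin n) ℝ) (E : Matrix (Fin m) (Fin p) ℝ)
    (b : Fin m → ℝ) (c : Fin n → ℝ)
    (σ : Fin n → Fin m) (hσ : Function.Injective σ)
    (At : Matrix (Fin n) (Fin n) ℝ) (Et : Matrix (Fin n) (Fin p) ℝ) (bt : Fin n → ℝ)
    (Ab : Matrix {i : Fin m // i ∉ Set.range σ} (Fin n) ℝ)
    (Eb : Matrix {i : Fin m // i ∉ Set.range σ} (Fin p) ℝ)
    (bb : {i : Fin m // i ∉ Set.range σ} → ℝ)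
    (hAt : At = A.submatrix σ id) (hEt : Et = E.submatrix σ id) (hbt : bt = b ∘ σ)
    (hAb : Ab = A.submatrix Subtype.val id) (hEb : Eb = E.submatrix Subtype.val id)
    (hbb : bb = b ∘ Subtype.val)
    (hInv : IsUnit At)
    (y₀ : Fin m → ℝ) (hy₀ : 0 ≤ y₀)
    (hstat : c + Aᵀ.mulVec y₀ = 0)
    (hsupp : ∀ i : Fin m, i ∉ Set.range σ → y₀ i = 0) :
    ∀ θ : Fin p → ℝ,
      (∀ i : {i : Fin m // i ∉ Set.range σ},
        ((Ab * At⁻¹ * Et - Eb).mulVec θ) i < (bb - (Ab * At⁻¹).mulVec bt) i) →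
      IsLeast {v : ℝ | ∃ x : Fin n → ℝ, A.mulVec x ≤ b + E.mulVec θ ∧ v = c ⬝ᵥ x}
        (c ⬝ᵥ At⁻¹.mulVec bt + c ⬝ᵥ (At⁻¹ * Et).mulVec θ) := by
  subst hAt hEt hbt hAb hEb hbb
  intro θ hθ
  set At := A.submatrix σ id with hAt
  set Et := E.submatrix σ id with hEt
  have hdet : IsUnit At.det := (Matrix.isUnit_iff_isUnit_det _).mp hInv
  set xs := At⁻¹.mulVec (b ∘ σ + Et.mulVec θ) with hxs
  -- value equals c ⬝ xs
  have hval : c ⬝ᵥ At⁻¹.mulVec (b ∘ σ) + c ⬝ᵥ (At⁻¹ * Et).mulVec θ = c ⬝ᵥ xs := by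
    rw [hxs, Matrix.mulVec_add, dotProduct_add, ← Matrix.mulVec_mulVec]
  -- active rows hold with equality
  have hAx : ∀ j : Fin n, A.mulVec xs (σ j) = (b + E.mulVec θ) (σ j) := by
    have h1 : At.mulVec xs = b ∘ σ + Et.mulVec θ := by
      rw [hxs, Matrix.mulVec_mulVec, Matrix.mul_nonsing_inv _ hdet, Matrix.one_mulVec]
    intro j
    have h2 : At.mulVec xs j = A.mulVec xs (σ j) := by
      simp [Matrix.mulVec, dotProduct, hAt, Matrix.submatrix_apply]
    have h3 : (b ∘ σ + Et.mulVec θ) j = (b + E.mulVec θ) (σ j) := by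
      simp [Matrix.mulVec, dotProduct, hEt, Matrix.submatrix_apply]
    rw [← h2, h1, h3]
  -- feasibility of xs
  have hfeas : A.mulVec xs ≤ b + E.mulVec θ := by
    intro i
    by_cases hi : i ∈ Set.range σ
    · obtain ⟨j, rfl⟩ := hi
      exact le_of_eq (hAx j)
    · have h := hθ ⟨i, hi⟩
      have hAbx : (A.submatrix (Subtype.val : {i : Fin m // i ∉ Set.range σ} → Fin m) id).mulVec xs ⟨i, hi⟩
          = A.mulVec xs i := by
        simp [Matrix.mulVec, dotProduct, Matrix.submatrix_apply]
      have hAbx2 : (A.submatrix (Subtype.val : {i : Fin m // i ∉ Set.range σ} → Fin m) id).mulVec xs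
          = ((A.submatrix Subtype.val id * At⁻¹).mulVec (b ∘ σ)
            + (A.submatrix Subtype.val id * At⁻¹ * Et).mulVec θ) := by
        rw [hxs, Matrix.mulVec_mulVec, Matrix.mulVec_add]; simp [Matrix.mulVec_mulVec]
      rw [Matrix.sub_mulVec, Pi.sub_apply, Pi.sub_apply] at h
      have : A.mulVec xs i < b i + E.mulVec θ i := by
        have hEbθ : (E.submatrix (Subtype.val : {i : Fin m // i ∉ Set.range σ} → Fin m) id).mulVec θ ⟨i, hi⟩
            = E.mulVec θ i := by
          simp [Matrix.mulVec, dotProduct, Matrix.submatrix_apply]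
        have := h
        rw [hEbθ] at this
        have h4 : A.mulVec xs i = ((A.submatrix (Subtype.val : {i : Fin m // i ∉ Set.range σ} → Fin m) id * At⁻¹).mulVec (b ∘ σ)) ⟨i, hi⟩
            + ((A.submatrix (Subtype.val : {i : Fin m // i ∉ Set.range σ} → Fin m) id * At⁻¹ * Et).mulVec θ) ⟨i, hi⟩ := by
          rw [← hAbx, hAbx2]; rfl
        rw [h4]
        have hbbe : (b ∘ (Subtype.val : {i : Fin m // i ∉ Set.range σ} → Fin m)) ⟨i, hi⟩ = b i := rfl
        rw [hbbe] at this
        linarith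
      exact le_of_lt this
  -- c = -(A.vecMul y₀)
  have hc : c = -(A.vecMul y₀) := by
    have := hstat
    rw [Matrix.mulVec_transpose] at this
    have : c = -(y₀ ᵥ* A) := by
      funext k
      have hk := congrFun this k
      simp at hk ⊢
      linarith
    simpa [Matrix.vecMul] using this
  have hcd : ∀ x : Fin n → ℝ, c ⬝ᵥ x = -(y₀ ⬝ᵥ A.mulVec x) := by
    intro x
    rw [hc, neg_dotProduct, ← Matrix.dotProduct_mulVec]
  -- c ⬝ xs = -(y₀ ⬝ (b + Eθ))
  have hxsval : c ⬝ᵥ xs = -(y₀ ⬝ᵥ (b + E.mulVec θ)) := by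
    rw [hcd]
    congr 1
    unfold dotProduct
    apply Finset.sum_congr rfl
    intro i _
    by_cases hi : i ∈ Set.range σ
    · obtain ⟨j, rfl⟩ := hi
      rw [hAx j]
    · rw [hsupp i hi]; ring
  constructor
  · exact ⟨xs, hfeas, hval⟩
  · rintro v ⟨x, hx, rfl⟩
    rw [hval, hxsval, hcd x]
    have : y₀ ⬝ᵥ A.mulVec x ≤ y₀ ⬝ᵥ (b + E.mulVec θ) := by
      apply Finset.sum_le_sum
      intro i _
      exact mul_le_mul_of_nonneg_left (hx i) (hy₀ i)
    linarith
end

section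
/- Quadratic dependence of the optimal value on the parameter within a critical region (MPQP): Let H be a real symmetric positive definite n×n matrix, A a real m×n matrix, E a real m×p matrix, b ∈ ℝᵐ. Let I ⊆ {1,…,m} be an index set, let Ã, Ẽ, b̃ denote the submatrices/subvector of A, E, b formed by the rows in I, and Ā, Ē, b̄ those formed by the rows in the complement of I; assume the rows of Ã are linearly independent. Suppose θ ∈ ℝᵖ satisfies (Ã H⁻¹ Ãᵀ)⁻¹ (b̃ + Ẽ θ) ≤ 0 and Ā H⁻¹ Ãᵀ (Ã H⁻¹ Ãᵀ)⁻¹ (b̃ + Ẽ θ) < b̄ + Ē θ. Then the minimum of (1/2) xᵀ H x over {x : A x ≤ b + E θ} equals (1/2) (b̃ + Ẽ θ)ᵀ (Ã H⁻¹ Ãᵀ)⁻¹ (b̃ + Ẽ θ); in particular, on the critical region the optimal value is a quadratic function of θ. -/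
/-!
Write `w = b̃ + Ẽθ` and `λ = (ÃH⁻¹Ãᵀ)⁻¹w`. The point `x* = H⁻¹Ãᵀλ` satisfies `Ãx* = w` and
`Hx* = Ãᵀλ`; the primal condition says it is feasible for the inactive rows. For any feasible `x`,
with `d = x - x*`, one has `xᵀHx = x*ᵀHx* + 2 (Ãd)ᵀλ + dᵀHd`, where `Ãd ≤ 0` and `λ ≤ 0` (the dual
condition) make the middle term nonnegative and positive definiteness the last. Finally
`x*ᵀHx* = (Ãx*)ᵀλ = wᵀλ`.
-/

open Matrix

section QuadraticProgram

variable {ι κ : Type*} [Fintype ι] [Fintype κ]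

lemma dotProduct_nonneg_of_nonpos {R : Type*} [CommRing R] [PartialOrder R] [IsOrderedRing R]
    {u v : κ → R} (hu : u ≤ 0) (hv : v ≤ 0) : 0 ≤ u ⬝ᵥ v :=
  Finset.sum_nonneg fun i _ => mul_nonneg_of_nonpos_of_nonpos (hu i) (hv i)

lemma add_dotProduct_mulVec_add_of_transpose_eq {R : Type*} [CommRing R] {H : Matrix ι ι R}
    (hH : Hᵀ = H) (x d : ι → R) :
    (x + d) ⬝ᵥ H *ᵥ (x + d) = x ⬝ᵥ H *ᵥ x + 2 * (d ⬝ᵥ H *ᵥ x) + d ⬝ᵥ H *ᵥ d := by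
  have hcomm : x ⬝ᵥ H *ᵥ d = d ⬝ᵥ H *ᵥ x := by
    rw [dotProduct_mulVec, ← mulVec_transpose, hH, dotProduct_comm]
  rw [mulVec_add, add_dotProduct, dotProduct_add, dotProduct_add, hcomm]
  ring

theorem dotProduct_mulVec_le_of_kkt {H : Matrix ι ι ℝ} (hH : H.PosSemidef) {B : Matrix κ ι ℝ}
    {x₀ x : ι → ℝ} {μ w : κ → ℝ} (hstat : H *ᵥ x₀ = Bᵀ *ᵥ μ) (hμ : μ ≤ 0)
    (hx₀ : B *ᵥ x₀ = w) (hx : B *ᵥ x ≤ w) :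
    x₀ ⬝ᵥ H *ᵥ x₀ ≤ x ⬝ᵥ H *ᵥ x := by
  have hcross : 0 ≤ (x - x₀) ⬝ᵥ H *ᵥ x₀ := by
    rw [hstat, dotProduct_mulVec, vecMul_transpose, mulVec_sub, hx₀]
    exact dotProduct_nonneg_of_nonpos (sub_nonpos.2 hx) hμ
  have hquad : 0 ≤ (x - x₀) ⬝ᵥ H *ᵥ (x - x₀) := by
    simpa using hH.dotProduct_mulVec_nonneg (x - x₀)
  have hsymm : Hᵀ = H := by
    simpa [conjTranspose_eq_transpose_of_trivial] using hH.isHermitian.eq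
  have hexpand := add_dotProduct_mulVec_add_of_transpose_eq hsymm x₀ (x - x₀)
  rw [add_sub_cancel] at hexpand
  linarith

variable [DecidableEq ι] [DecidableEq κ]

/-- The minimizer of `xᵀ H x` on the affine subspace `B x = w`; the paper's `x*(θ)` for `B = Ã`,
`w = b̃ + Ẽθ`. -/
noncomputable def activeSetMinimizer (H : Matrix ι ι ℝ) (B : Matrix κ ι ℝ) (w : κ → ℝ) : ι → ℝ :=
  (H⁻¹ * Bᵀ * (B * H⁻¹ * Bᵀ)⁻¹) *ᵥ w

variable {H : Matrix ι ι ℝ} {B : Matrix κ ι ℝ} {w : κ → ℝ}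

lemma mulVec_activeSetMinimizer_eq_transpose_mulVec (hH : IsUnit H) :
    H *ᵥ activeSetMinimizer H B w = Bᵀ *ᵥ (B * H⁻¹ * Bᵀ)⁻¹ *ᵥ w := by
  rw [activeSetMinimizer, mulVec_mulVec, ← Matrix.mul_assoc, ← Matrix.mul_assoc,
    mul_nonsing_inv _ ((isUnit_iff_isUnit_det H).1 hH), Matrix.one_mul, mulVec_mulVec]

lemma mulVec_activeSetMinimizer (hM : IsUnit (B * H⁻¹ * Bᵀ)) :
    B *ᵥ activeSetMinimizer H B w = w := by
  rw [activeSetMinimizer, mulVec_mulVec, ← Matrix.mul_assoc, ← Matrix.mul_assoc,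
    mul_nonsing_inv _ ((isUnit_iff_isUnit_det _).1 hM), one_mulVec]

lemma activeSetMinimizer_dotProduct_mulVec (hH : IsUnit H) (hM : IsUnit (B * H⁻¹ * Bᵀ)) :
    activeSetMinimizer H B w ⬝ᵥ H *ᵥ activeSetMinimizer H B w
      = w ⬝ᵥ (B * H⁻¹ * Bᵀ)⁻¹ *ᵥ w := by
  rw [mulVec_activeSetMinimizer_eq_transpose_mulVec hH, dotProduct_mulVec, vecMul_transpose,
    mulVec_activeSetMinimizer hM]

theorem isLeast_activeSetMinimizer (hH : H.PosDef) (hM : IsUnit (B * H⁻¹ * Bᵀ))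
    (hμ : (B * H⁻¹ * Bᵀ)⁻¹ *ᵥ w ≤ 0) {S : Set (ι → ℝ)} (hS : ∀ x ∈ S, B *ᵥ x ≤ w)
    (hx₀ : activeSetMinimizer H B w ∈ S) :
    IsLeast {v : ℝ | ∃ x, x ∈ S ∧ v = (1/2) * (x ⬝ᵥ H *ᵥ x)}
      ((1/2) * (w ⬝ᵥ (B * H⁻¹ * Bᵀ)⁻¹ *ᵥ w)) := by
  refine ⟨⟨_, hx₀, by rw [activeSetMinimizer_dotProduct_mulVec hH.isUnit hM]⟩, ?_⟩
  rintro v ⟨x, hx, rfl⟩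
  rw [← activeSetMinimizer_dotProduct_mulVec hH.isUnit hM]
  gcongr
  exact dotProduct_mulVec_le_of_kkt hH.posSemidef
    (mulVec_activeSetMinimizer_eq_transpose_mulVec hH.isUnit) hμ (mulVec_activeSetMinimizer hM)
    (hS x hx)

end QuadraticProgram

theorem mpqp_value_quadratic_on_critical_region_general {m n p k : ℕ}
    (H : Matrix (Fin n) (Fin n) ℝ)
    (hHsym : Hᵀ = H)
    (hHpd : ∀ v : Fin n → ℝ, v ≠ 0 → 0 < v ⬝ᵥ H.mulVec v)
    (A : Matrix (Fin m) (Fin n) ℝ) (E : Matrix (Fin m) (Fin p) ℝ) (b : Fin m → ℝ)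
    (σ : Fin k → Fin m)
    (At : Matrix (Fin k) (Fin n) ℝ) (Et : Matrix (Fin k) (Fin p) ℝ) (bt : Fin k → ℝ)
    (Ab : Matrix {i : Fin m // i ∉ Set.range σ} (Fin n) ℝ)
    (Eb : Matrix {i : Fin m // i ∉ Set.range σ} (Fin p) ℝ)
    (bb : {i : Fin m // i ∉ Set.range σ} → ℝ)
    (hAt : At = A.submatrix σ id) (hEt : Et = E.submatrix σ id) (hbt : bt = b ∘ σ)
    (hAb : Ab = A.submatrix Subtype.val id) (hEb : Eb = E.submatrix Subtype.val id)
    (hbb : bb = b ∘ Subtype.val)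
    (hrows : LinearIndependent ℝ (fun i : Fin k => At i))
    (θ : Fin p → ℝ)
    (hPd : (At * H⁻¹ * Atᵀ)⁻¹.mulVec (bt + Et.mulVec θ) ≤ 0)
    (hPp : ∀ i : {i : Fin m // i ∉ Set.range σ},
      (Ab * H⁻¹ * Atᵀ * (At * H⁻¹ * Atᵀ)⁻¹).mulVec (bt + Et.mulVec θ) i
        < (bb + Eb.mulVec θ) i) :
    IsLeast {v : ℝ | ∃ x : Fin n → ℝ, A.mulVec x ≤ b + E.mulVec θ ∧
        v = (1/2) * (x ⬝ᵥ H.mulVec x)}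
      ((1/2) * ((bt + Et.mulVec θ) ⬝ᵥ
        (At * H⁻¹ * Atᵀ)⁻¹.mulVec (bt + Et.mulVec θ))) := by
  have hH : H.PosDef := .of_dotProduct_mulVec_pos (by simpa [IsHermitian] using hHsym)
    fun v hv => by simpa using hHpd v hv
  have hM : (At * H⁻¹ * Atᵀ).PosDef := by
    simpa only [conjTranspose_eq_transpose_of_trivial] using
      hH.inv.mul_mul_conjTranspose_same (vecMul_injective_iff.2 hrows)
  subst hAt hEt hbt hAb hEb hbb
  refine isLeast_activeSetMinimizer (S := {x | A *ᵥ x ≤ b + E *ᵥ θ}) hH hM.isUnit hPd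
    (fun x hx j => hx (σ j)) fun i => ?_
  by_cases hi : i ∈ Set.range σ
  · obtain ⟨j, rfl⟩ := hi
    exact (congrFun (mulVec_activeSetMinimizer hM.isUnit) j).le
  · have hinactive := (hPp ⟨i, hi⟩).le
    simp only [activeSetMinimizer, Matrix.mul_assoc] at hinactive ⊢
    rw [← mulVec_mulVec] at hinactive
    exact hinactive

/-- Quadratic dependence of the optimal value on the parameter within a
critical region (MPQP).  The active index set is `I = Set.range σ`;
`At, Et, bt` are the rows of `A, E, b` in `I` (assumed linearly independent)
and `Ab, Eb, bb` the rows in its complement.  For `θ` in the critical region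
`𝒫_p ∩ 𝒫_d`, the minimum of `(1/2)xᵀHx` over `{x : A x ≤ b + E θ}` is
attained and equals `(1/2)(b̃+Ẽθ)ᵀ(ÃH⁻¹Ãᵀ)⁻¹(b̃+Ẽθ)`. -/
theorem mpqp_value_quadratic_on_critical_region {m n p k : ℕ}
    (H : Matrix (Fin n) (Fin n) ℝ)
    (hHsym : Hᵀ = H)
    (hHpd : ∀ v : Fin n → ℝ, v ≠ 0 → 0 < v ⬝ᵥ H.mulVec v)
    (A : Matrix (Fin m) (Fin n) ℝ) (E : Matrix (Fin m) (Fin p) ℝ) (b : Fin m → ℝ)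
    (σ : Fin k → Fin m) (hσ : Function.Injective σ)
    (At : Matrix (Fin k) (Fin n) ℝ) (Et : Matrix (Fin k) (Fin p) ℝ) (bt : Fin k → ℝ)
    (Ab : Matrix {i : Fin m // i ∉ Set.range σ} (Fin n) ℝ)
    (Eb : Matrix {i : Fin m // i ∉ Set.range σ} (Fin p) ℝ)
    (bb : {i : Fin m // i ∉ Set.range σ} → ℝ)
    (hAt : At = A.submatrix σ id) (hEt : Et = E.submatrix σ id) (hbt : bt = b ∘ σ)
    (hAb : Ab = A.submatrix Subtype.val id) (hEb : Eb = E.submatrix Subtype.val id)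
    (hbb : bb = b ∘ Subtype.val)
    (hrows : LinearIndependent ℝ (fun i : Fin k => At i))
    (θ : Fin p → ℝ)
    (hPd : (At * H⁻¹ * Atᵀ)⁻¹.mulVec (bt + Et.mulVec θ) ≤ 0)
    (hPp : ∀ i : {i : Fin m // i ∉ Set.range σ},
      (Ab * H⁻¹ * Atᵀ * (At * H⁻¹ * Atᵀ)⁻¹).mulVec (bt + Et.mulVec θ) i
        < (bb + Eb.mulVec θ) i) :
    IsLeast {v : ℝ | ∃ x : Fin n → ℝ, A.mulVec x ≤ b + E.mulVec θ ∧
        v = (1/2) * (x ⬝ᵥ H.mulVec x)}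
      ((1/2) * ((bt + Et.mulVec θ) ⬝ᵥ
        (At * H⁻¹ * Atᵀ)⁻¹.mulVec (bt + Et.mulVec θ))) :=
  mpqp_value_quadratic_on_critical_region_general H hHsym hHpd A E b σ At Et bt Ab Eb bb hAt hEt hbt
    hAb hEb hbb hrows θ hPd hPp
end
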